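/- Two triangles are congruent if they have an equal side, an equal angle opposite to that side, and an equal internal bisector of that angle. Precisely: if triangles ABC and ABC' satisfy ∠ACB = ∠AC'B, with C and C' on the same side of line AB and on the same side of the perpendicular bisector of AB, and the internal angle bisectors from C and C' (to side AB) have equal lengths, then the triangles are congruent (C = C'). -/

import Mathlib

/-!
Write `a = CA`, `b = CB`, `c = AB`, `γ = ∠ACB` and `d = CD`. The angle bisector theorem and
Stewart's theorem give `d² (a + b)² = a b ((a + b)² - c²)`, and the law of cosines gives
`(a + b)² - c² = 2 (1 + cos γ) a b`. Eliminating `a b`, the sum `p = a + b` satisfies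
`(p² - c²) / p = d √(2 (1 + cos γ))`, whose left side is strictly increasing in `p`; so `c`, `γ`
and `d` determine `a + b`, hence also `a b`, hence `{a, b}`. The side of the perpendicular
bisector decides which of `a, b` is the smaller one, and the two distances from `A` and `B`
together with the side of `AB` determine `C`.
-/

open EuclideanGeometry Real

noncomputable section

abbrev Pt : Type := EuclideanSpace ℝ (Fin 2)

theorem eq_and_eq_of_add_eq_of_mul_eq {R : Type*} [CommRing R] [IsDomain R] [LinearOrder R]
    {a b a' b' : R} (hsum : a + b = a' + b') (hprod : a * b = a' * b')
    (hlt : a < b ↔ a' < b') (hne : a ≠ b) : a = a' ∧ b = b' := by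
  have hroot : (a - a') * (a - b') = 0 := by linear_combination a * hsum - hprod
  rcases mul_eq_zero.mp hroot with h | h
  · exact ⟨sub_eq_zero.mp h, by linear_combination hsum - h⟩
  · obtain rfl : a = b' := sub_eq_zero.mp h
    obtain rfl : b = a' := by linear_combination hsum
    grind

theorem add_eq_add_and_mul_eq_mul_of_bisector_relation {a b a' b' c d k : ℝ}
    (ha : 0 < a) (hb : 0 < b) (ha' : 0 < a') (hb' : 0 < b') (hk : -1 < k)
    (hc : c ^ 2 = a ^ 2 + b ^ 2 - 2 * a * b * k) (hc' : c ^ 2 = a' ^ 2 + b' ^ 2 - 2 * a' * b' * k)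
    (hd : d ^ 2 * (a + b) ^ 2 = 2 * (1 + k) * a ^ 2 * b ^ 2)
    (hd' : d ^ 2 * (a' + b') ^ 2 = 2 * (1 + k) * a' ^ 2 * b' ^ 2) :
    a + b = a' + b' ∧ a * b = a' * b' := by
  set p := a + b
  set p' := a' + b'
  have hκ : 0 < 2 * (1 + k) := by linarith
  have hq : 2 * (1 + k) * (a * b) = p ^ 2 - c ^ 2 := by linear_combination hc
  have hq' : 2 * (1 + k) * (a' * b') = p' ^ 2 - c ^ 2 := by linear_combination hc'
  have hpos : 0 < (p ^ 2 - c ^ 2) * p' := by rw [← hq]; positivity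
  have hpos' : 0 < (p' ^ 2 - c ^ 2) * p := by rw [← hq']; positivity
  have hsq : ((p ^ 2 - c ^ 2) * p') ^ 2 = ((p' ^ 2 - c ^ 2) * p) ^ 2 := by
    rw [← hq, ← hq']
    -- both sides equal `2 (1 + k) (d p p')²`
    linear_combination (2 * (1 + k)) * (p ^ 2 * hd' - p' ^ 2 * hd)
  have heq := (pow_left_inj₀ hpos.le hpos'.le two_ne_zero).mp hsq
  have hp : p = p' := by
    have hfac : (p - p') * (p * p' + c ^ 2) = 0 := by linear_combination heq
    have hne : p * p' + c ^ 2 ≠ 0 := by positivity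
    exact sub_eq_zero.mp ((mul_eq_zero.mp hfac).resolve_right hne)
  refine ⟨hp, mul_left_cancel₀ hκ.ne' ?_⟩
  rw [hq, hq', hp]

namespace EuclideanGeometry

variable {V P : Type*} [NormedAddCommGroup V] [InnerProductSpace ℝ V] [MetricSpace P]
  [NormedAddTorsor V P]

theorem sbtw_of_angle_eq_angle {A B C D : P} (h : ¬Collinear ℝ {A, B, C}) (hD : Wbtw ℝ A D B)
    (hbis : ∠ A C D = ∠ B C D) : Sbtw ℝ A D B := by
  refine ⟨hD, ?_, ?_⟩
  · rintro rfl
    rw [angle_self_of_ne (ne₁₃_of_not_collinear h)] at hbis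
    exact (angle_pos_of_not_collinear (p₁ := B) (p₂ := C) (p₃ := D) (by
      rwa [Set.insert_comm, Set.pair_comm] at h)).ne hbis
  · rintro rfl
    rw [angle_self_of_ne (ne₂₃_of_not_collinear h)] at hbis
    exact (angle_pos_of_not_collinear (p₁ := A) (p₂ := C) (p₃ := D) (by
      rwa [Set.pair_comm] at h)).ne' hbis

theorem angle_eq_half_of_angle_eq_angle {A B C D : P} (h : ¬Collinear ℝ {A, B, C})
    (hD : Wbtw ℝ A D B) (hbis : ∠ A C D = ∠ B C D) : ∠ A C D = ∠ A C B / 2 := by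
  have := angle_add_of_ne_of_ne (ne₁₃_of_not_collinear h).symm (ne₂₃_of_not_collinear h).symm hD
  rw [angle_comm D C B] at this
  linarith

theorem dist_mul_dist_eq_of_angle_eq_angle {A B C D : P} (h : ¬Collinear ℝ {A, B, C})
    (hD : Wbtw ℝ A D B) (hbis : ∠ A C D = ∠ B C D) :
    dist A D * dist C B = dist D B * dist C A := by
  have hsin : Real.sin (∠ A C D) ≠ 0 := by
    have hγ : 0 < ∠ A C B := angle_pos_of_not_collinear (by rwa [Set.pair_comm] at h)
    rw [angle_eq_half_of_angle_eq_angle h hD hbis]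
    exact (Real.sin_pos_of_pos_of_lt_pi (by positivity) (by linarith [angle_le_pi A C B])).ne'
  have hsupp : Real.sin (∠ C D A) = Real.sin (∠ C D B) := by
    have hpi := angle_add_angle_eq_pi_of_angle_eq_pi C
      (sbtw_of_angle_eq_angle h hD hbis).angle₁₂₃_eq_pi
    rw [← Real.sin_pi_sub, ← hpi, add_sub_cancel_left]
  have hA := law_sin D C A
  have hB := law_sin D C B
  rw [angle_comm, angle_comm A D C, hsupp] at hA
  rw [angle_comm, ← hbis, angle_comm B D C, dist_comm B D] at hB
  refine mul_left_cancel₀ hsin ?_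
  linear_combination dist A D * hB - dist D B * hA

theorem dist_sq_mul_sq_eq_of_angle_eq_angle {A B C D : P} (h : ¬Collinear ℝ {A, B, C})
    (hD : Wbtw ℝ A D B) (hbis : ∠ A C D = ∠ B C D) :
    dist C D ^ 2 * (dist C A + dist C B) ^ 2 =
      2 * (1 + Real.cos (∠ A C B)) * dist C A ^ 2 * dist C B ^ 2 := by
  have hstewart := dist_sq_mul_dist_add_dist_sq_mul_dist C A B D
    (sbtw_of_angle_eq_angle h hD hbis).angle₁₂₃_eq_pi
  have hratio := dist_mul_dist_eq_of_angle_eq_angle h hD hbis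
  have hsplit := hD.dist_add_dist
  have hcos := law_cos A C B
  have hc : dist A B ≠ 0 := dist_ne_zero.mpr (ne₁₂_of_not_collinear h)
  rw [dist_comm B D] at hstewart
  rw [dist_comm A C, dist_comm B C] at hcos
  set a := dist C A
  set b := dist C B
  set c := dist A B
  set x := dist A D
  set y := dist D B
  have hx : x * (a + b) = c * a := by linear_combination hratio + a * hsplit
  have hy : y * (a + b) = c * b := by linear_combination -hratio + b * hsplit
  have hd : c * (dist C D ^ 2 * (a + b) ^ 2 - a * b * ((a + b) ^ 2 - c ^ 2)) = 0 := by
    linear_combination -(a + b) ^ 2 * hstewart + a ^ 2 * (a + b) * hy + b ^ 2 * (a + b) * hx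
      - c * y * (a + b) * hx - c ^ 2 * a * hy
  linear_combination (mul_eq_zero.mp hd).resolve_left hc - a * b * hcos

theorem add_eq_add_and_mul_eq_mul_of_angle_eq_of_dist_eq {A B C C' D D' : P}
    (h : ¬Collinear ℝ {A, B, C}) (h' : ¬Collinear ℝ {A, B, C'}) (hang : ∠ A C B = ∠ A C' B)
    (hD : Wbtw ℝ A D B) (hbisD : ∠ A C D = ∠ B C D)
    (hD' : Wbtw ℝ A D' B) (hbisD' : ∠ A C' D' = ∠ B C' D')
    (hlen : dist C D = dist C' D') :
    dist C A + dist C B = dist C' A + dist C' B ∧ dist C A * dist C B = dist C' A * dist C' B := by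
  have hcos := law_cos A C B
  have hcos' := law_cos A C' B
  rw [dist_comm A C, dist_comm B C] at hcos
  rw [dist_comm A C', dist_comm B C', ← hang] at hcos'
  have hbis := dist_sq_mul_sq_eq_of_angle_eq_angle h hD hbisD
  have hbis' := dist_sq_mul_sq_eq_of_angle_eq_angle h' hD' hbisD'
  rw [← hlen, ← hang] at hbis'
  have hγ : ∠ A C B < π := angle_lt_pi_of_not_collinear (by rwa [Set.pair_comm] at h)
  have hk : -1 < Real.cos (∠ A C B) := by
    simpa using Real.cos_lt_cos_of_nonneg_of_le_pi (angle_nonneg A C B) le_rfl hγ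
  exact add_eq_add_and_mul_eq_mul_of_bisector_relation (c := dist A B)
    (dist_pos.mpr (ne₁₃_of_not_collinear h).symm) (dist_pos.mpr (ne₂₃_of_not_collinear h).symm)
    (dist_pos.mpr (ne₁₃_of_not_collinear h').symm) (dist_pos.mpr (ne₂₃_of_not_collinear h').symm)
    hk (by linear_combination hcos) (by linear_combination hcos') hbis hbis'

theorem dist_lt_dist_of_sSameSide_perpBisector {A B C C' : P}
    (h : (AffineSubspace.perpBisector A B).SSameSide C C') (hC : dist C A < dist C B) :
    dist C' A < dist C' B := by
  by_contra! hC'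
  obtain ⟨X, hX, hXeq⟩ :=
    (AffineSubspace.isPreconnected_setOfPred_sSameSide _ C).intermediate_value₂
      (AffineSubspace.sSameSide_self_iff.mpr ⟨h.nonempty, h.left_notMem⟩) h
      (continuous_id.dist continuous_const).continuousOn
      (continuous_id.dist continuous_const).continuousOn hC.le hC'
  exact hX.right_notMem (AffineSubspace.mem_perpBisector_iff_dist_eq.mpr hXeq)

theorem dist_lt_dist_iff_of_sSameSide_perpBisector {A B C C' : P}
    (h : (AffineSubspace.perpBisector A B).SSameSide C C') :
    dist C A < dist C B ↔ dist C' A < dist C' B :=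
  ⟨dist_lt_dist_of_sSameSide_perpBisector h, dist_lt_dist_of_sSameSide_perpBisector h.symm⟩

theorem eq_of_dist_eq_of_dist_eq_of_sSameSide [Fact (Module.finrank ℝ V = 2)] {A B C C' : P}
    (hAB : A ≠ B) (hA : dist C A = dist C' A) (hB : dist C B = dist C' B)
    (hside : line[ℝ, A, B].SSameSide C C') : C = C' := by
  have := FiniteDimensional.of_fact_finrank_eq_two (K := ℝ) (V := V)
  have : Module.Oriented ℝ V (Fin 2) := ⟨(Module.finBasisOfFinrankEq ℝ V Fact.out).orientation⟩
  have hAmem : A ∈ line[ℝ, A, B] := left_mem_affineSpan_pair ℝ A B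
  have hBmem : B ∈ line[ℝ, A, B] := right_mem_affineSpan_pair ℝ A B
  have hCA : C ≠ A := fun h ↦ hside.left_notMem (h ▸ hAmem)
  have hC'A : C' ≠ A := fun h ↦ hside.right_notMem (h ▸ hAmem)
  have hangle : ∠ B A C = ∠ B A C' := by
    simpa using angle_eq_of_congruent
      (side_side_side rfl (by rwa [dist_comm A C, dist_comm A C']) hB) 0 1 2
  have hsign : (∡ B A C).sign = (∡ B A C').sign := by
    rw [← oangle_rotate_sign B A C, ← oangle_rotate_sign B A C']
    exact (hside.oangle_sign_eq hAmem hBmem).symm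
  have hzero : ∡ C A C' = 0 := by
    rw [← oangle_sub_left hAB.symm hCA hC'A, oangle_eq_of_angle_eq_of_sign_eq hangle hsign,
      sub_self]
  have hnorm : ‖C -ᵥ A‖ = ‖C' -ᵥ A‖ := by rwa [← dist_eq_norm_vsub, ← dist_eq_norm_vsub]
  exact vsub_left_cancel ((o.eq_iff_oangle_eq_zero_of_norm_eq hnorm).mpr hzero)

end EuclideanGeometry

theorem congr_of_bisector (A B C C' D D' : Pt)
    (hABC : AffineIndependent ℝ ![A, B, C])
    (hABC' : AffineIndependent ℝ ![A, B, C'])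
    (hang : ∠ A C B = ∠ A C' B)
    (hside : (affineSpan ℝ ({A, B} : Set Pt)).SSameSide C C')
    (hside' : (AffineSubspace.perpBisector A B).SSameSide C C')
    (hD : D ∈ segment ℝ A B) (hbisD : ∠ A C D = ∠ B C D)
    (hD' : D' ∈ segment ℝ A B) (hbisD' : ∠ A C' D' = ∠ B C' D')
    (hlen : dist C D = dist C' D') :
    C = C' := by
  have h := affineIndependent_iff_not_collinear_set.mp hABC
  have h' := affineIndependent_iff_not_collinear_set.mp hABC'
  obtain ⟨hsum, hprod⟩ := add_eq_add_and_mul_eq_mul_of_angle_eq_of_dist_eq h h' hang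
    (mem_segment_iff_wbtw.mp hD) hbisD (mem_segment_iff_wbtw.mp hD') hbisD' hlen
  have hne : dist C A ≠ dist C B := fun heq ↦
    hside'.left_notMem (AffineSubspace.mem_perpBisector_iff_dist_eq.mpr heq)
  obtain ⟨hA, hB⟩ := eq_and_eq_of_add_eq_of_mul_eq hsum hprod
    (dist_lt_dist_iff_of_sSameSide_perpBisector hside') hne
  have : Fact (Module.finrank ℝ Pt = 2) := ⟨finrank_euclideanSpace_fin⟩
  exact eq_of_dist_eq_of_dist_eq_of_sSameSide (ne₁₂_of_not_collinear h) hA hB hside
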